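/- arXiv:2112.13871 — 6 statements merged into one kernel-verified Lean document; each statement's English description precedes it below -/
import Mathlib

section
/- Let (X, 𝒜, μ) be a σ-finite measure space, let k : X → ℝ be measurable, let m ≤ M be real numbers with m ≤ k(x) ≤ M for μ-a.e. x ∈ X, and let g : X → ℝ be μ-integrable. Then ∫_X k(x) g(x) dμ(x) = m ∫_X g(x) dμ(x) + ∫_m^M ( ∫_{{x ∈ X : k(x) > y}} g(x) dμ(x) ) dy, where the outer integral on the right is the Lebesgue integral over the interval [m, M]. -/
/-! Integrate `g x` against the indicator of the region `{(x, y) | y < k x}` of `X × (m, M]`.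
Fubini's theorem computes this integral in two ways: over `y` first it gives `(k x - m) g x`,
over `x` first it gives the integral of `g` over the superlevel set `{k > y}`. -/

open MeasureTheory Set

theorem integral_measureReal_Iio_mul_eq_integral_setIntegral_lt
    {X : Type*} [MeasurableSpace X] {μ : Measure X} [SFinite μ] {ν : Measure ℝ}
    [IsFiniteMeasure ν] {k : X → ℝ} (hk : Measurable k) {g : X → ℝ} (hg : Integrable g μ) :
    ∫ x, ν.real (Iio (k x)) * g x ∂μ = ∫ y, ∫ x in {x | y < k x}, g x ∂μ ∂ν := by
  set s : Set (X × ℝ) := {p | p.2 < k p.1}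
  have hs : MeasurableSet s := measurableSet_lt measurable_snd (hk.comp measurable_fst)
  have hsection_fst (x : X) :
      (fun y => s.indicator (fun p => g p.1) (x, y)) = (Iio (k x)).indicator fun _ => g x := rfl
  have hsection_snd (y : ℝ) :
      (fun x => s.indicator (fun p => g p.1) (x, y)) = {x | y < k x}.indicator g := rfl
  have hswap := integral_integral_swap (f := fun x y => s.indicator (fun p => g p.1) (x, y))
    ((hg.comp_fst ν).indicator hs)
  simpa only [hsection_fst, hsection_snd, integral_indicator_const _ measurableSet_Iio,
    integral_indicator (measurableSet_lt measurable_const hk), smul_eq_mul] using hswap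

theorem measureReal_restrict_Ioc_Iio {m M t : ℝ} (hmt : m ≤ t) (htM : t ≤ M) :
    (volume.restrict (Ioc m M)).real (Iio t) = t - m := by
  have hinter : Iio t ∩ Ioc m M = Ioo m t := by
    ext y
    simp only [mem_inter_iff, mem_Iio, mem_Ioc, mem_Ioo]
    constructor
    · rintro ⟨hyt, hmy, -⟩
      exact ⟨hmy, hyt⟩
    · rintro ⟨hmy, hyt⟩
      exact ⟨hyt, hmy, hyt.le.trans htM⟩
  rw [measureReal_restrict_apply measurableSet_Iio, hinter, Real.volume_real_Ioo_of_le hmt]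

/-- Layer-cake identity (C1): for a measurable weight `k` with `m ≤ k ≤ M` a.e.
and an integrable `g`,
`∫ k g dμ = m ∫ g dμ + ∫_{m}^{M} (∫_{{k > y}} g dμ) dy`. -/
theorem layer_cake_superlevel
    {X : Type*} [MeasurableSpace X] (μ : Measure X) [SigmaFinite μ]
    (k : X → ℝ) (hk : Measurable k)
    (m M : ℝ) (hmM : m ≤ M)
    (hbd : ∀ᵐ x ∂μ, m ≤ k x ∧ k x ≤ M)
    (g : X → ℝ) (hg : Integrable g μ) :
    ∫ x, k x * g x ∂μ
      = m * ∫ x, g x ∂μ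
        + ∫ y in m..M, (∫ x in {x | k x > y}, g x ∂μ) := by
  have hk_bdd : ∀ᵐ x ∂μ, ‖k x‖ ≤ max |m| |M| := by
    filter_upwards [hbd] with x ⟨hmk, hkM⟩
    exact abs_le_max_abs_abs hmk hkM
  have hkg : Integrable (fun x => k x * g x) μ := hg.bdd_mul hk.aestronglyMeasurable hk_bdd
  have hweight : ∀ᵐ x ∂μ,
      (volume.restrict (Ioc m M)).real (Iio (k x)) * g x = (k x - m) * g x := by
    filter_upwards [hbd] with x ⟨hmk, hkM⟩
    rw [measureReal_restrict_Ioc_Iio hmk hkM]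
  calc ∫ x, k x * g x ∂μ = m * ∫ x, g x ∂μ + ∫ x, (k x - m) * g x ∂μ := by
        simp only [sub_mul]
        rw [integral_sub hkg (hg.const_mul m), integral_const_mul]
        ring
    _ = m * ∫ x, g x ∂μ + ∫ y in Ioc m M, ∫ x in {x | y < k x}, g x ∂μ := by
        rw [← integral_congr_ae hweight,
          integral_measureReal_Iio_mul_eq_integral_setIntegral_lt hk hg]
    _ = _ := by rw [intervalIntegral.integral_of_le hmM]
end

section
/- Let (X, 𝒜, μ) be a σ-finite measure space, let k : X → ℝ be measurable, let m ≤ M be real numbers with m ≤ k(x) ≤ M for μ-a.e. x ∈ X, and let g : X → ℝ be μ-integrable. Then ∫_X k(x) g(x) dμ(x) = M ∫_X g(x) dμ(x) − ∫_m^M ( ∫_{{x ∈ X : k(x) ≤ y}} g(x) dμ(x) ) dy, where the outer integral on the right is the Lebesgue integral over the interval [m, M]. -/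
/-!
For a.e. `x`, `M - k x` is the length of `{y ∈ (m, M] : k x ≤ y}`, so Fubini applied to
`(y, x) ↦ 1[k x ≤ y] g x` on `(m, M] × X` gives
`∫_m^M ∫_{k ≤ y} g dμ dy = ∫ (M - k) g dμ = M ∫ g dμ - ∫ k g dμ`.
-/

open MeasureTheory Set

theorem Real.volume_real_Ici_inter_Ioc {a m M : ℝ} (hma : m ≤ a) (haM : a ≤ M) :
    volume.real (Ici a ∩ Ioc m M) = M - a := by
  have h : (Ici a ∩ Ioc m M : Set ℝ) =ᵐ[volume] (Ioi a ∩ Ioc m M : Set ℝ) :=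
    Ioi_ae_eq_Ici.symm.inter (Filter.EventuallyEq.refl _ _)
  rw [measureReal_congr h, inter_comm, Ioc_inter_Ioi, max_eq_right hma,
    Real.volume_real_Ioc_of_le haM]

theorem integral_setIntegral_sublevel {X : Type*} [MeasurableSpace X] {μ : Measure X} [SFinite μ]
    {k g : X → ℝ} (ν : Measure ℝ) [IsFiniteMeasure ν]
    (hk : Measurable k) (hg : Integrable g μ) :
    ∫ y, (∫ x in {x | k x ≤ y}, g x ∂μ) ∂ν = ∫ x, ν.real (Ici (k x)) * g x ∂μ := by
  have hF : Integrable (Function.uncurry fun y x => {x | k x ≤ y}.indicator g x) (ν.prod μ) :=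
    (hg.comp_snd ν).indicator (measurableSet_le (hk.comp measurable_snd) measurable_fst)
  calc ∫ y, (∫ x in {x | k x ≤ y}, g x ∂μ) ∂ν
      = ∫ y, ∫ x, {x | k x ≤ y}.indicator g x ∂μ ∂ν := by
        congr! 2 with y
        exact (integral_indicator (hk measurableSet_Iic)).symm
    _ = ∫ x, ∫ y, (Ici (k x)).indicator (fun _ => g x) y ∂ν ∂μ := by
        rw [integral_integral_swap hF]
        congr! 3 with x y
    _ = ∫ x, ν.real (Ici (k x)) * g x ∂μ := by
        simp only [integral_indicator_const _ measurableSet_Ici, smul_eq_mul]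

/-- Layer-cake identity (C2): for a measurable weight `k` with `m ≤ k ≤ M` a.e.
and an integrable `g`,
`∫ k g dμ = M ∫ g dμ − ∫_{m}^{M} (∫_{{k ≤ y}} g dμ) dy`. -/
theorem layer_cake_sublevel
    {X : Type*} [MeasurableSpace X] (μ : Measure X) [SigmaFinite μ]
    (k : X → ℝ) (hk : Measurable k)
    (m M : ℝ) (hmM : m ≤ M)
    (hbd : ∀ᵐ x ∂μ, m ≤ k x ∧ k x ≤ M)
    (g : X → ℝ) (hg : Integrable g μ) :
    ∫ x, k x * g x ∂μ
      = M * ∫ x, g x ∂μ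
        - ∫ y in m..M, (∫ x in {x | k x ≤ y}, g x ∂μ) := by
  have hkg : Integrable (fun x => k x * g x) μ := by
    refine hg.bdd_mul (c := max |m| |M|) hk.aestronglyMeasurable ?_
    filter_upwards [hbd] with x hx
    exact abs_le_max_abs_abs hx.1 hx.2
  have hlayer : ∀ᵐ x ∂μ, (volume.restrict (Ioc m M)).real (Ici (k x)) * g x
      = M * g x - k x * g x := by
    filter_upwards [hbd] with x hx
    rw [measureReal_restrict_apply measurableSet_Ici,
      Real.volume_real_Ici_inter_Ioc hx.1 hx.2, sub_mul]
  rw [intervalIntegral.integral_of_le hmM, integral_setIntegral_sublevel _ hk hg,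
    integral_congr_ae hlayer, integral_sub (hg.const_mul M) hkg, integral_const_mul, sub_sub_cancel]
end

section
/- Let (X, 𝒜, μ) be a σ-finite measure space, let k : X → ℝ be measurable, let m < M be real numbers with m ≤ k(x) ≤ M for μ-a.e. x ∈ X, and let g : X → ℝ be μ-integrable. Assume that for every y with m < y < M one has ∫_{{x : k(x) > y}} g dμ > 0 and ∫_{{x : k(x) ≤ y}} g dμ > 0. Then ∫_X g dμ > 0 and there exists a constant k̂ with m < k̂ < M such that ∫_X k(x) g(x) dμ(x) = k̂ ∫_X g(x) dμ(x). -/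
/-!
Integrating the layer-cake formula `k x - m = ∫ t in (0, M - m], 1[m + t < k x]` against `g` and
exchanging the integrals (Fubini; `g` is integrable and the `t`-range finite) gives
`∫ (k - m) g = ∫ t in (0, M - m], ∫_{k > m + t} g`, whose integrand is positive by hypothesis.
Likewise `∫ (M - k) g = ∫ t in (0, M - m], ∫_{k ≤ M - t} g > 0`. These two inequalities say that
`k̂ := ∫ k g / ∫ g` lies strictly between `m` and `M`.
-/

open MeasureTheory Set

section Slices

variable {X Y : Type*} [MeasurableSpace X] [MeasurableSpace Y] {μ : Measure X}
  {ν : Measure Y} [IsFiniteMeasure ν] {A : Set (X × Y)} {g : X → ℝ}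

lemma integrable_indicator_slice_prod (hA : MeasurableSet A) (hg : Integrable g μ) :
    Integrable (fun p : X × Y => {x | (x, p.2) ∈ A}.indicator g p.1) (μ.prod ν) := by
  have hg₁ : Integrable (fun p : X × Y => g p.1) (μ.prod ν) := by
    simpa using hg.mul_prod (integrable_const (1 : ℝ) (μ := ν))
  exact hg₁.indicator hA

lemma setIntegral_slice_eq_integral_indicator (hA : MeasurableSet A) (y : Y) :
    ∫ x in {x | (x, y) ∈ A}, g x ∂μ = ∫ x, {x | (x, y) ∈ A}.indicator g x ∂μ :=
  (integral_indicator (measurable_prodMk_right hA)).symm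

variable [SigmaFinite μ]

lemma integrable_setIntegral_slice (hA : MeasurableSet A) (hg : Integrable g μ) :
    Integrable (fun y => ∫ x in {x | (x, y) ∈ A}, g x ∂μ) ν := by
  simp_rw [setIntegral_slice_eq_integral_indicator hA]
  exact (integrable_indicator_slice_prod hA hg).integral_prod_right

lemma integral_setIntegral_slice_eq (hA : MeasurableSet A) (hg : Integrable g μ) :
    ∫ y, ∫ x in {x | (x, y) ∈ A}, g x ∂μ ∂ν = ∫ x, ν.real {y | (x, y) ∈ A} * g x ∂μ := by
  have hslice (x : X) :
      ν.real {y | (x, y) ∈ A} * g x = ∫ y, {x | (x, y) ∈ A}.indicator g x ∂ν := by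
    have hmeas : MeasurableSet {y | (x, y) ∈ A} := measurable_prodMk_left hA
    rw [← smul_eq_mul, ← integral_indicator_const (μ := ν) (g x) hmeas]
    rfl
  simp_rw [hslice, setIntegral_slice_eq_integral_indicator hA]
  exact (integral_integral_swap (f := fun x y => {x | (x, y) ∈ A}.indicator g x)
    (integrable_indicator_slice_prod hA hg)).symm

end Slices

lemma measureReal_restrict_Ioc_Iic {a L : ℝ} (ha : 0 ≤ a) (haL : a ≤ L) :
    (volume.restrict (Ioc 0 L)).real (Iic a) = a := by
  rw [measureReal_restrict_apply measurableSet_Iic, Iic_inter_Ioc_of_le haL,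
    Real.volume_real_Ioc_of_le ha, sub_zero]

lemma measureReal_restrict_Ioc_Iio_s2 {a L : ℝ} (ha : 0 ≤ a) (haL : a ≤ L) :
    (volume.restrict (Ioc 0 L)).real (Iio a) = a := by
  rw [measureReal_congr Iio_ae_eq_Iic, measureReal_restrict_Ioc_Iic ha haL]

section LevelSets

variable {X : Type*} [MeasurableSpace X] {μ : Measure X} [SigmaFinite μ] {g : X → ℝ}

lemma integral_mul_pos_of_setIntegral_slice_pos {L : ℝ} (hL : 0 < L) {A : Set (X × ℝ)}
    (hA : MeasurableSet A) (hg : Integrable g μ) {f : X → ℝ}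
    (hf : ∀ᵐ x ∂μ, (volume.restrict (Ioc 0 L)).real {t | (x, t) ∈ A} = f x)
    (hpos : ∀ t ∈ Ioo 0 L, 0 < ∫ x in {x | (x, t) ∈ A}, g x ∂μ) :
    0 < ∫ x, f x * g x ∂μ := by
  have hφ := integrable_setIntegral_slice (ν := volume.restrict (Ioc 0 L)) hA hg
  calc 0 < ∫ t in Ioc 0 L, ∫ x in {x | (x, t) ∈ A}, g x ∂μ := by
        rw [← intervalIntegral.integral_of_le hL.le]
        exact intervalIntegral.intervalIntegral_pos_of_pos_on
          ((intervalIntegrable_iff_integrableOn_Ioc_of_le hL.le).2 hφ) hpos hL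
    _ = ∫ x, f x * g x ∂μ := by
        rw [integral_setIntegral_slice_eq hA hg]
        refine integral_congr_ae ?_
        filter_upwards [hf] with x hx
        rw [hx]

variable {k : X → ℝ} {m M : ℝ}

lemma integral_sub_mul_pos_of_superlevel (hk : Measurable k) (hmM : m < M)
    (hbd : ∀ᵐ x ∂μ, m ≤ k x ∧ k x ≤ M) (hg : Integrable g μ)
    (hsuper : ∀ y, m < y → y < M → 0 < ∫ x in {x | k x > y}, g x ∂μ) :
    0 < ∫ x, (k x - m) * g x ∂μ := by
  refine integral_mul_pos_of_setIntegral_slice_pos (sub_pos.2 hmM) (A := {p | m + p.2 < k p.1})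
    (measurableSet_lt (measurable_const.add measurable_snd) (hk.comp measurable_fst)) hg ?_
    fun t ht => hsuper (m + t) (by linarith [ht.1]) (by linarith [ht.2])
  filter_upwards [hbd] with x hx
  have hslice : {t : ℝ | m + t < k x} = Iio (k x - m) := by
    ext t
    simp [lt_sub_iff_add_lt']
  rw [hslice, measureReal_restrict_Ioc_Iio_s2 (by linarith) (by linarith)]

lemma integral_sub_mul_pos_of_sublevel (hk : Measurable k) (hmM : m < M)
    (hbd : ∀ᵐ x ∂μ, m ≤ k x ∧ k x ≤ M) (hg : Integrable g μ)
    (hsub : ∀ y, m < y → y < M → 0 < ∫ x in {x | k x ≤ y}, g x ∂μ) :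
    0 < ∫ x, (M - k x) * g x ∂μ := by
  refine integral_mul_pos_of_setIntegral_slice_pos (sub_pos.2 hmM) (A := {p | k p.1 ≤ M - p.2})
    (measurableSet_le (hk.comp measurable_fst) (measurable_const.sub measurable_snd)) hg ?_
    fun t ht => hsub (M - t) (by linarith [ht.2]) (by linarith [ht.1])
  filter_upwards [hbd] with x hx
  have hslice : {t : ℝ | k x ≤ M - t} = Iic (M - k x) := by
    ext t
    simp [le_sub_comm]
  rw [hslice, measureReal_restrict_Ioc_Iic (by linarith) (by linarith)]

end LevelSets

/-- Mean Value Theorem for integrals against a bounded measurable weight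
(Lemma 5 of the paper): if every superlevel and sublevel set of `k` strictly
between the bounds carries positive integral of `g`, then `∫ g dμ > 0` and
`∫ k g dμ = k̂ ∫ g dμ` for some constant `k̂ ∈ (m, M)`. -/
theorem mean_value_weight
    {X : Type*} [MeasurableSpace X] (μ : Measure X) [SigmaFinite μ]
    (k : X → ℝ) (hk : Measurable k)
    (m M : ℝ) (hmM : m < M)
    (hbd : ∀ᵐ x ∂μ, m ≤ k x ∧ k x ≤ M)
    (g : X → ℝ) (hg : Integrable g μ)
    (hsuper : ∀ y, m < y → y < M → 0 < ∫ x in {x | k x > y}, g x ∂μ)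
    (hsub : ∀ y, m < y → y < M → 0 < ∫ x in {x | k x ≤ y}, g x ∂μ) :
    0 < ∫ x, g x ∂μ ∧
      ∃ khat : ℝ, m < khat ∧ khat < M ∧
        ∫ x, k x * g x ∂μ = khat * ∫ x, g x ∂μ := by
  have hI : 0 < ∫ x, g x ∂μ := by
    obtain ⟨y, hmy, hyM⟩ := exists_between hmM
    rw [← integral_add_compl (measurableSet_lt measurable_const hk) hg, compl_ofPred]
    simp_rw [not_lt]
    exact add_pos (hsuper y hmy hyM) (hsub y hmy hyM)
  have hkg : Integrable (fun x => k x * g x) μ := by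
    refine hg.bdd_mul (c := max |m| |M|) hk.aestronglyMeasurable ?_
    filter_upwards [hbd] with x hx
    exact abs_le_max_abs_abs hx.1 hx.2
  have hlow := integral_sub_mul_pos_of_superlevel hk hmM hbd hg hsuper
  have hhigh := integral_sub_mul_pos_of_sublevel hk hmM hbd hg hsub
  simp_rw [sub_mul] at hlow hhigh
  rw [integral_sub hkg (hg.const_mul m), integral_const_mul] at hlow
  rw [integral_sub (hg.const_mul M) hkg, integral_const_mul] at hhigh
  refine ⟨hI, (∫ x, k x * g x ∂μ) / ∫ x, g x ∂μ, ?_, ?_, (div_mul_cancel₀ _ hI.ne').symm⟩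
  · rw [lt_div_iff₀ hI]
    linarith
  · rw [div_lt_iff₀ hI]
    linarith
end

section
/- Let X be a nonempty connected topological space equipped with its Borel σ-algebra and a σ-finite Borel measure μ, let k : X → ℝ be continuous, let m < M be real numbers with m ≤ k(x) ≤ M for every x ∈ X, and let g : X → ℝ be μ-integrable. Assume that for every y with m < y < M one has ∫_{{x : k(x) > y}} g dμ > 0 and ∫_{{x : k(x) ≤ y}} g dμ > 0. Then there exists a point x₀ ∈ X such that ∫_X k(x) g(x) dμ(x) = k(x₀) ∫_X g(x) dμ(x). -/
open MeasureTheory Set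

/-!
Layer-cake formula with a signed weight: by Fubini on `{(x, y) | m < y < k x}`,
`∫ k g dμ = m ∫ g dμ + ∫_m^M (∫_{k > y} g dμ) dy`. The hypothesis on superlevel sets makes
the last integral positive, and, after passing to complements, the one on sublevel sets gives
the symmetric bound with `M`. Hence `∫ g dμ > 0` and `k̂ = ∫ k g dμ / ∫ g dμ` lies strictly
between `m` and `M`, so `k` takes values on both sides of `k̂`; by connectedness it takes `k̂`.
-/

lemma setIntegral_Ioc_indicator_Iio {m M c : ℝ} (hmc : m ≤ c) (hcM : c ≤ M) (a : ℝ) :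
    ∫ y in Ioc m M, (Iio c).indicator (fun _ => a) y = (c - m) * a := by
  have hinter : Iio c ∩ Ioc m M = Ioo m c := by
    ext y
    simp only [mem_inter_iff, mem_Iio, mem_Ioc, mem_Ioo]
    exact ⟨fun h => ⟨h.2.1, h.1⟩, fun h => ⟨h.2, h.1, h.2.le.trans hcM⟩⟩
  rw [integral_indicator measurableSet_Iio, Measure.restrict_restrict measurableSet_Iio, hinter,
    setIntegral_const, Real.volume_real_Ioo_of_le hmc, smul_eq_mul]

section LayerCake

variable {X : Type*} [MeasurableSpace X] {μ : Measure X} {k g : X → ℝ} {m M : ℝ}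

lemma setIntegral_sublevel_eq_sub (hk : Measurable k) (hg : Integrable g μ) (y : ℝ) :
    ∫ x in {x | k x ≤ y}, g x ∂μ = ∫ x, g x ∂μ - ∫ x in {x | y < k x}, g x ∂μ := by
  have hcompl : {x | k x ≤ y} = {x | y < k x}ᶜ := by
    ext x
    simp
  rw [hcompl, setIntegral_compl (measurableSet_lt measurable_const hk) hg]

lemma nonempty_of_setIntegral_pos {s : Set X} (hpos : 0 < ∫ x in s, g x ∂μ) : s.Nonempty :=
  nonempty_iff_ne_empty.2 fun hs => by simp [hs] at hpos

lemma integrable_indicator_subgraph (hk : Measurable k) (hg : Integrable g μ) :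
    Integrable ({p : X × ℝ | p.2 < k p.1}.indicator fun p => g p.1)
      (μ.prod (volume.restrict (Ioc m M))) := by
  have : IsFiniteMeasure (volume.restrict (Ioc m M)) := by
    rw [isFiniteMeasure_restrict]
    exact measure_Ioc_lt_top.ne
  simpa using (hg.mul_prod (integrable_const (1 : ℝ))).indicator
    (measurableSet_lt measurable_snd (hk.comp measurable_fst))

lemma integral_indicator_subgraph_left (hk : Measurable k) (y : ℝ) :
    ∫ x, {p : X × ℝ | p.2 < k p.1}.indicator (fun p => g p.1) (x, y) ∂μ =
      ∫ x in {x | y < k x}, g x ∂μ := by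
  rw [← integral_indicator (measurableSet_lt measurable_const hk)]
  rfl

lemma intervalIntegrable_setIntegral_superlevel [SFinite μ] (hk : Measurable k)
    (hg : Integrable g μ) (hmM : m ≤ M) :
    IntervalIntegrable (fun y => ∫ x in {x | y < k x}, g x ∂μ) volume m M := by
  rw [intervalIntegrable_iff_integrableOn_Ioc_of_le hmM]
  exact (integrable_indicator_subgraph hk hg).integral_prod_right.congr
    (ae_of_all _ (integral_indicator_subgraph_left hk))

theorem integral_mul_eq_add_intervalIntegral_superlevel [SFinite μ] (hk : Measurable k)
    (hkm : ∀ x, m ≤ k x) (hkM : ∀ x, k x ≤ M) (hg : Integrable g μ) (hmM : m ≤ M) :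
    ∫ x, k x * g x ∂μ = m * ∫ x, g x ∂μ + ∫ y in m..M, ∫ x in {x | y < k x}, g x ∂μ := by
  have hkg : Integrable (fun x => k x * g x) μ :=
    hg.bdd_mul (c := max |m| |M|) hk.aestronglyMeasurable (ae_of_all _ fun x =>
      abs_le_max_abs_abs (hkm x) (hkM x))
  have hinner : ∀ x, ∫ y in Ioc m M, {p : X × ℝ | p.2 < k p.1}.indicator (fun p => g p.1) (x, y) =
      (k x - m) * g x := fun x =>
    setIntegral_Ioc_indicator_Iio (hkm x) (hkM x) (g x)
  have hfubini : ∫ x, (k x - m) * g x ∂μ = ∫ y in Ioc m M, ∫ x in {x | y < k x}, g x ∂μ := by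
    simp only [← hinner, ← integral_indicator_subgraph_left hk]
    exact integral_integral_swap (integrable_indicator_subgraph hk hg)
  rw [intervalIntegral.integral_of_le hmM, ← hfubini]
  simp only [sub_mul]
  rw [integral_sub hkg (hg.const_mul m), integral_const_mul]
  ring

lemma intervalIntegrable_setIntegral_sublevel [SFinite μ] (hk : Measurable k)
    (hg : Integrable g μ) (hmM : m ≤ M) :
    IntervalIntegrable (fun y => ∫ x in {x | k x ≤ y}, g x ∂μ) volume m M := by
  simp only [setIntegral_sublevel_eq_sub hk hg]
  exact intervalIntegrable_const.sub (intervalIntegrable_setIntegral_superlevel hk hg hmM)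

theorem integral_mul_eq_sub_intervalIntegral_sublevel [SFinite μ] (hk : Measurable k)
    (hkm : ∀ x, m ≤ k x) (hkM : ∀ x, k x ≤ M) (hg : Integrable g μ) (hmM : m ≤ M) :
    ∫ x, k x * g x ∂μ = M * ∫ x, g x ∂μ - ∫ y in m..M, ∫ x in {x | k x ≤ y}, g x ∂μ := by
  simp only [setIntegral_sublevel_eq_sub hk hg]
  rw [intervalIntegral.integral_sub intervalIntegrable_const
      (intervalIntegrable_setIntegral_superlevel hk hg hmM), intervalIntegral.integral_const,
    integral_mul_eq_add_intervalIntegral_superlevel hk hkm hkM hg hmM, smul_eq_mul]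
  ring

end LayerCake

theorem mean_value_weight_attained_general
    {X : Type*} [TopologicalSpace X] [ConnectedSpace X]
    [MeasurableSpace X] [BorelSpace X]
    (μ : Measure X) [SigmaFinite μ]
    (k : X → ℝ) (hk : Continuous k)
    (m M : ℝ) (hmM : m < M)
    (hbd : ∀ x, m ≤ k x ∧ k x ≤ M)
    (g : X → ℝ) (hg : Integrable g μ)
    (hsuper : ∀ y, m < y → y < M → 0 < ∫ x in {x | k x > y}, g x ∂μ)
    (hsub : ∀ y, m < y → y < M → 0 < ∫ x in {x | k x ≤ y}, g x ∂μ) :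
    ∃ x₀ : X, ∫ x, k x * g x ∂μ = k x₀ * ∫ x, g x ∂μ := by
  have hkm : ∀ x, m ≤ k x := fun x => (hbd x).1
  have hkM : ∀ x, k x ≤ M := fun x => (hbd x).2
  have hlower : m * ∫ x, g x ∂μ < ∫ x, k x * g x ∂μ := by
    rw [integral_mul_eq_add_intervalIntegral_superlevel hk.measurable hkm hkM hg hmM.le,
      lt_add_iff_pos_right]
    exact intervalIntegral.intervalIntegral_pos_of_pos_on
      (intervalIntegrable_setIntegral_superlevel hk.measurable hg hmM.le)
      (fun y hy => hsuper y hy.1 hy.2) hmM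
  have hupper : ∫ x, k x * g x ∂μ < M * ∫ x, g x ∂μ := by
    rw [integral_mul_eq_sub_intervalIntegral_sublevel hk.measurable hkm hkM hg hmM.le,
      sub_lt_self_iff]
    exact intervalIntegral.intervalIntegral_pos_of_pos_on
      (intervalIntegrable_setIntegral_sublevel hk.measurable hg hmM.le)
      (fun y hy => hsub y hy.1 hy.2) hmM
  have hI : 0 < ∫ x, g x ∂μ := by nlinarith
  set c := (∫ x, k x * g x ∂μ) / ∫ x, g x ∂μ with hc
  have hmc : m < c := (lt_div_iff₀ hI).2 hlower
  have hcM : c < M := (div_lt_iff₀ hI).2 hupper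
  obtain ⟨a, ha⟩ := nonempty_of_setIntegral_pos (hsub c hmc hcM)
  obtain ⟨b, hb⟩ := nonempty_of_setIntegral_pos (hsuper c hmc hcM)
  obtain ⟨x₀, hx₀⟩ := intermediate_value_univ a b hk ⟨ha, le_of_lt hb⟩
  exact ⟨x₀, by rw [hx₀, hc, div_mul_cancel₀ _ hI.ne']⟩

/-- Attained form of the Mean Value Theorem (underlying Corollary 6 of the
paper): for a continuous weight `k` on a nonempty connected space, the mean
value `k̂` is realized as `k x₀` for some point `x₀`. -/
theorem mean_value_weight_attained
    {X : Type*} [TopologicalSpace X] [ConnectedSpace X] [Nonempty X]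
    [MeasurableSpace X] [BorelSpace X]
    (μ : Measure X) [SigmaFinite μ]
    (k : X → ℝ) (hk : Continuous k)
    (m M : ℝ) (hmM : m < M)
    (hbd : ∀ x, m ≤ k x ∧ k x ≤ M)
    (g : X → ℝ) (hg : Integrable g μ)
    (hsuper : ∀ y, m < y → y < M → 0 < ∫ x in {x | k x > y}, g x ∂μ)
    (hsub : ∀ y, m < y → y < M → 0 < ∫ x in {x | k x ≤ y}, g x ∂μ) :
    ∃ x₀ : X, ∫ x, k x * g x ∂μ = k x₀ * ∫ x, g x ∂μ :=
  mean_value_weight_attained_general μ k hk m M hmM hbd g hg hsuper hsub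
end

section
/- Let E be a real inner product space, let a, b ∈ E with b ≠ 0, let p > 1 be a real number, and let s ≥ 0 and t > 0 be real numbers. Then p · (s/t)^{p−1} · ‖b‖^{p−2} · ⟨b, a⟩ ≤ ‖a‖^p + (p−1) · (s/t)^p · ‖b‖^p; equivalently, the quantity ‖a‖^p + (p−1)(s/t)^p ‖b‖^p − p (s/t)^{p−1} ‖b‖^{p−2} ⟨b, a⟩ is nonnegative. -/
open scoped RealInnerProductSpace

/-- Pointwise nonnegativity at the heart of the Picone-type identity
(Lemma 8 of the paper): for `a, b` in a real inner product space with `b ≠ 0`,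
`p > 1`, `s ≥ 0`, `t > 0`,
`p (s/t)^{p-1} ‖b‖^{p-2} ⟨b, a⟫ ≤ ‖a‖^p + (p-1)(s/t)^p ‖b‖^p`. -/
theorem picone_pointwise
    {E : Type*} [NormedAddCommGroup E] [InnerProductSpace ℝ E]
    (a b : E) (hb : b ≠ 0) (p : ℝ) (hp : 1 < p)
    (s t : ℝ) (hs : 0 ≤ s) (ht : 0 < t) :
    p * (s / t) ^ (p - 1) * ‖b‖ ^ (p - 2) * ⟪b, a⟫
      ≤ ‖a‖ ^ p + (p - 1) * (s / t) ^ p * ‖b‖ ^ p := by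
  have hb' : 0 < ‖b‖ := norm_pos_iff.mpr hb
  set c : ℝ := s / t with hc
  have hc0 : 0 ≤ c := div_nonneg hs ht.le
  have hp0 : 0 < p := lt_trans one_pos hp
  have hcb : 0 ≤ c * ‖b‖ := mul_nonneg hc0 hb'.le
  -- Step 1: Cauchy-Schwarz
  have h1 : p * c ^ (p - 1) * ‖b‖ ^ (p - 2) * ⟪b, a⟫
      ≤ p * c ^ (p - 1) * ‖b‖ ^ (p - 1) * ‖a‖ := by
    have hcs : ⟪b, a⟫ ≤ ‖b‖ * ‖a‖ := real_inner_le_norm b a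
    have hnn : 0 ≤ p * c ^ (p - 1) * ‖b‖ ^ (p - 2) :=
      mul_nonneg (mul_nonneg hp0.le (Real.rpow_nonneg hc0 _)) (Real.rpow_nonneg hb'.le _)
    calc p * c ^ (p - 1) * ‖b‖ ^ (p - 2) * ⟪b, a⟫
        ≤ p * c ^ (p - 1) * ‖b‖ ^ (p - 2) * (‖b‖ * ‖a‖) := mul_le_mul_of_nonneg_left hcs hnn
      _ = p * c ^ (p - 1) * ‖b‖ ^ (p - 1) * ‖a‖ := by
          have : ‖b‖ ^ (p - 2) * ‖b‖ = ‖b‖ ^ (p - 1) := by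
            have he : p - 2 + 1 = p - 1 := by ring
            rw [← Real.rpow_add_one hb'.ne', he]
          rw [mul_assoc (p * c ^ (p - 1)), ← mul_assoc (‖b‖ ^ (p-2)), this]
          ring
  -- Step 2: Young's inequality
  have hq : p.HolderConjugate (p / (p - 1)) := Real.HolderConjugate.conjExponent hp
  have hy := Real.young_inequality_of_nonneg (norm_nonneg a)
    (Real.rpow_nonneg hcb (p - 1)) hq
  have hpow : ((c * ‖b‖) ^ (p - 1)) ^ (p / (p - 1)) = (c * ‖b‖) ^ p := by
    rw [← Real.rpow_mul hcb]
    congr 1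
    have hp1 : p - 1 ≠ 0 := by linarith
    field_simp
  rw [hpow] at hy
  -- hy : ‖a‖ * (c*‖b‖)^(p-1) ≤ ‖a‖^p / p + (c*‖b‖)^p / (p/(p-1))
  have h2 : p * c ^ (p - 1) * ‖b‖ ^ (p - 1) * ‖a‖
      ≤ ‖a‖ ^ p + (p - 1) * c ^ p * ‖b‖ ^ p := by
    have hmul : c ^ (p - 1) * ‖b‖ ^ (p - 1) = (c * ‖b‖) ^ (p - 1) :=
      (Real.mul_rpow hc0 hb'.le).symm
    have hmul2 : c ^ p * ‖b‖ ^ p = (c * ‖b‖) ^ p := (Real.mul_rpow hc0 hb'.le).symm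
    have := mul_le_mul_of_nonneg_left hy hp0.le
    calc p * c ^ (p - 1) * ‖b‖ ^ (p - 1) * ‖a‖
        = p * (‖a‖ * (c * ‖b‖) ^ (p - 1)) := by rw [← hmul]; ring
      _ ≤ p * (‖a‖ ^ p / p + (c * ‖b‖) ^ p / (p / (p - 1))) := this
      _ = ‖a‖ ^ p + (p - 1) * (c * ‖b‖) ^ p := by
          have hp1 : p - 1 ≠ 0 := by linarith
          field_simp
      _ = ‖a‖ ^ p + (p - 1) * c ^ p * ‖b‖ ^ p := by rw [← hmul2]; ring
  linarith
end

section
/- Let N ≥ 1, let p > 1 be a (constant) real number, let w₁, w₂ : ℝ^N → ℝ be differentiable at a point x ∈ ℝ^N with w₁(x) > 0 and w₂(x) > 0. Then the function y ↦ w₁(y)^p / w₂(y)^{p−1} is differentiable at x with gradient ∇(w₁^p / w₂^{p−1})(x) = p (w₁(x)/w₂(x))^{p−1} ∇w₁(x) − (p−1) (w₁(x)/w₂(x))^p ∇w₂(x); consequently |∇w₁(x)|^p − |∇w₂(x)|^{p−2} ⟨∇w₂(x), ∇(w₁^p/w₂^{p−1})(x)⟩ = |∇w₁(x)|^p + (p−1)(w₁(x)/w₂(x))^p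 |∇w₂(x)|^p − p (w₁(x)/w₂(x))^{p−1} |∇w₂(x)|^{p−2} ⟨∇w₂(x), ∇w₁(x)⟩, and this common value is nonnegative. -/
/-!
The gradient of `w₁ ^ p / w₂ ^ (p - 1) = w₁ ^ p * w₂ ^ (1 - p)` comes from the product and chain
rules, and pairing it with `‖∇w₂‖ ^ (p - 2) • ∇w₂` gives `L₁` because
`‖∇w₂‖ ^ (p - 2) * ‖∇w₂‖ ^ 2 = ‖∇w₂‖ ^ p`. Nonnegativity of `L₁` is Cauchy–Schwarz followed by
Young's inequality `p * X ^ (p - 1) * a ≤ a ^ p + (p - 1) * X ^ p` with `a = ‖∇w₁‖` and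
`X = (w₁ / w₂) * ‖∇w₂‖`.
-/

open scoped RealInnerProductSpace
open Filter Topology

theorem Real.mul_rpow_sub_one_mul_le {a X p : ℝ} (ha : 0 ≤ a) (hX : 0 ≤ X) (hp : 1 < p) :
    p * X ^ (p - 1) * a ≤ a ^ p + (p - 1) * X ^ p := by
  have hp₁ : p - 1 ≠ 0 := by linarith
  have hyoung := Real.young_inequality_of_nonneg ha (Real.rpow_nonneg hX (p - 1))
    (Real.HolderConjugate.conjExponent hp)
  rw [Real.conjExponent, ← Real.rpow_mul hX, mul_div_cancel₀ p hp₁] at hyoung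
  calc p * X ^ (p - 1) * a = p * (a * X ^ (p - 1)) := by ring
    _ ≤ p * (a ^ p / p + X ^ p / (p / (p - 1))) := by gcongr
    _ = a ^ p + (p - 1) * X ^ p := by field_simp

section InnerProductSpace

variable {E : Type*} [NormedAddCommGroup E] [InnerProductSpace ℝ E]

theorem HasGradientAt.rpow_div_rpow_sub_one [CompleteSpace E] {f g : E → ℝ} {f' g' x : E}
    (hf : HasGradientAt f f' x) (hg : HasGradientAt g g' x) (hfx : 0 < f x) (hgx : 0 < g x)
    (p : ℝ) :
    HasGradientAt (fun y => f y ^ p / g y ^ (p - 1))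
      ((p * (f x / g x) ^ (p - 1)) • f' - ((p - 1) * (f x / g x) ^ p) • g') x := by
  have hprod := (hf.hasFDerivAt.rpow_const (p := p) (.inl hfx.ne')).mul
    (hg.hasFDerivAt.rpow_const (p := -(p - 1)) (.inl hgx.ne'))
  have hquot : (fun y => f y ^ p / g y ^ (p - 1)) =ᶠ[𝓝 x] fun y => f y ^ p * g y ^ (-(p - 1)) := by
    filter_upwards [hg.continuousAt.eventually (eventually_gt_nhds hgx)] with y hy
    rw [div_eq_mul_inv, Real.rpow_neg hy.le]
  rw [hasGradientAt_iff_hasFDerivAt]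
  refine (hprod.congr_of_eventuallyEq hquot).congr_fderiv ?_
  rw [map_sub, map_smul, map_smul, Real.div_rpow hfx.le hgx.le, Real.div_rpow hfx.le hgx.le,
    show -(p - 1) - 1 = -p by ring, Real.rpow_neg hgx.le, Real.rpow_neg hgx.le]
  match_scalars <;> field_simp

theorem rpow_norm_sub_two_mul_inner_sub_smul (a b : E) (c d : ℝ) {p : ℝ} (hp : p ≠ 0) :
    ‖b‖ ^ (p - 2) * ⟪b, c • a - d • b⟫ = c * ‖b‖ ^ (p - 2) * ⟪b, a⟫ - d * ‖b‖ ^ p := by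
  have hpow : ‖b‖ ^ (p - 2) * ‖b‖ ^ 2 = ‖b‖ ^ p := by
    rw [← Real.rpow_two, ← Real.rpow_add' (norm_nonneg b) (by simpa using hp), sub_add_cancel]
  rw [inner_sub_right, real_inner_smul_right, real_inner_smul_right, real_inner_self_eq_norm_sq,
    ← hpow]
  ring

theorem mul_rpow_norm_sub_two_mul_inner_le (a b : E) {t p : ℝ} (ht : 0 ≤ t) (hp : 1 < p) :
    p * t ^ (p - 1) * ‖b‖ ^ (p - 2) * ⟪b, a⟫ ≤ ‖a‖ ^ p + (p - 1) * t ^ p * ‖b‖ ^ p := by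
  have hpow : ‖b‖ ^ (p - 2) * ‖b‖ = ‖b‖ ^ (p - 1) := by
    rw [← Real.rpow_add_one' (norm_nonneg b) (by linarith)]
    ring_nf
  calc p * t ^ (p - 1) * ‖b‖ ^ (p - 2) * ⟪b, a⟫
      ≤ p * t ^ (p - 1) * ‖b‖ ^ (p - 2) * (‖b‖ * ‖a‖) := by
        gcongr
        exact real_inner_le_norm b a
    _ = p * (t * ‖b‖) ^ (p - 1) * ‖a‖ := by
        rw [Real.mul_rpow ht (norm_nonneg b), ← hpow]; ring
    _ ≤ ‖a‖ ^ p + (p - 1) * (t * ‖b‖) ^ p :=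
        Real.mul_rpow_sub_one_mul_le (norm_nonneg a) (by positivity) hp
    _ = ‖a‖ ^ p + (p - 1) * t ^ p * ‖b‖ ^ p := by
        rw [Real.mul_rpow ht (norm_nonneg b)]; ring

end InnerProductSpace

theorem picone_identity_constant_exponent_general
    (N : ℕ) (p : ℝ) (hp : 1 < p)
    (w₁ w₂ : EuclideanSpace ℝ (Fin N) → ℝ) (x : EuclideanSpace ℝ (Fin N))
    (hw₁ : DifferentiableAt ℝ w₁ x) (hw₂ : DifferentiableAt ℝ w₂ x)
    (hw₁x : 0 < w₁ x) (hw₂x : 0 < w₂ x) :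
    HasGradientAt (fun y => w₁ y ^ p / w₂ y ^ (p - 1))
        ((p * (w₁ x / w₂ x) ^ (p - 1)) • gradient w₁ x
          - ((p - 1) * (w₁ x / w₂ x) ^ p) • gradient w₂ x) x ∧
      ‖gradient w₁ x‖ ^ p
          - ‖gradient w₂ x‖ ^ (p - 2)
            * ⟪gradient w₂ x,
                (p * (w₁ x / w₂ x) ^ (p - 1)) • gradient w₁ x
                  - ((p - 1) * (w₁ x / w₂ x) ^ p) • gradient w₂ x⟫
        = ‖gradient w₁ x‖ ^ p
            + (p - 1) * (w₁ x / w₂ x) ^ p * ‖gradient w₂ x‖ ^ p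
            - p * (w₁ x / w₂ x) ^ (p - 1) * ‖gradient w₂ x‖ ^ (p - 2)
              * ⟪gradient w₂ x, gradient w₁ x⟫ ∧
      0 ≤ ‖gradient w₁ x‖ ^ p
            + (p - 1) * (w₁ x / w₂ x) ^ p * ‖gradient w₂ x‖ ^ p
            - p * (w₁ x / w₂ x) ^ (p - 1) * ‖gradient w₂ x‖ ^ (p - 2)
              * ⟪gradient w₂ x, gradient w₁ x⟫ := by
  refine ⟨hw₁.hasGradientAt.rpow_div_rpow_sub_one hw₂.hasGradientAt hw₁x hw₂x p, ?_,
    sub_nonneg.mpr (mul_rpow_norm_sub_two_mul_inner_le _ _ (div_pos hw₁x hw₂x).le hp)⟩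
  rw [rpow_norm_sub_two_mul_inner_sub_smul _ _ _ _ (by linarith : p ≠ 0)]
  ring

/-- Constant-exponent Picone identity `L₁(w₁,w₂) = L₂(w₁,w₂) ≥ 0`
(Lemma 8 of the paper) at a single point: differentiability of the quotient
`w₁^p / w₂^{p-1}`, the identity between the two expressions, and
nonnegativity of the common value. -/
theorem picone_identity_constant_exponent
    (N : ℕ) (hN : 1 ≤ N) (p : ℝ) (hp : 1 < p)
    (w₁ w₂ : EuclideanSpace ℝ (Fin N) → ℝ) (x : EuclideanSpace ℝ (Fin N))
    (hw₁ : DifferentiableAt ℝ w₁ x) (hw₂ : DifferentiableAt ℝ w₂ x)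
    (hw₁x : 0 < w₁ x) (hw₂x : 0 < w₂ x) :
    HasGradientAt (fun y => w₁ y ^ p / w₂ y ^ (p - 1))
        ((p * (w₁ x / w₂ x) ^ (p - 1)) • gradient w₁ x
          - ((p - 1) * (w₁ x / w₂ x) ^ p) • gradient w₂ x) x ∧
      ‖gradient w₁ x‖ ^ p
          - ‖gradient w₂ x‖ ^ (p - 2)
            * ⟪gradient w₂ x,
                (p * (w₁ x / w₂ x) ^ (p - 1)) • gradient w₁ x
                  - ((p - 1) * (w₁ x / w₂ x) ^ p) • gradient w₂ x⟫
        = ‖gradient w₁ x‖ ^ p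
            + (p - 1) * (w₁ x / w₂ x) ^ p * ‖gradient w₂ x‖ ^ p
            - p * (w₁ x / w₂ x) ^ (p - 1) * ‖gradient w₂ x‖ ^ (p - 2)
              * ⟪gradient w₂ x, gradient w₁ x⟫ ∧
      0 ≤ ‖gradient w₁ x‖ ^ p
            + (p - 1) * (w₁ x / w₂ x) ^ p * ‖gradient w₂ x‖ ^ p
            - p * (w₁ x / w₂ x) ^ (p - 1) * ‖gradient w₂ x‖ ^ (p - 2)
              * ⟪gradient w₂ x, gradient w₁ x⟫ :=
  picone_identity_constant_exponent_general N p hp w₁ w₂ x hw₁ hw₂ hw₁x hw₂x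
end
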